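/- Let G be a finite simple graph and let e = uw be an edge of G, regarded as a vertex of the line graph L(G). Then the primitive degree of e in L(G) equals Λ + C(deg(u)−1, 2) + C(deg(w)−1, 2), where Λ is the number of triangles of G containing the edge e and deg denotes degree in G. -/

import Mathlib

/-- The primitive hole number of a simple graph: the number of triangles
(3-cliques) in the graph. -/
noncomputable def SimpleGraph.holeNumber {V : Type*} (G : SimpleGraph V) : ℕ :=
  {s : Finset V | G.IsNClique 3 s}.ncard

/-- The primitive degree of a vertex: the number of triangles (3-cliques)
of the graph containing that vertex. -/
noncomputable def SimpleGraph.primDegree {V : Type*} (G : SimpleGraph V) (v : V) : ℕ :=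
  {s : Finset V | G.IsNClique 3 s ∧ v ∈ s}.ncard

/-- The total graph of a simple graph `G`: vertices are the vertices and edges of `G`,
two of them adjacent iff the corresponding elements of `G` are adjacent or incident. -/
def SimpleGraph.totalGraph {V : Type*} (G : SimpleGraph V) :
    SimpleGraph (V ⊕ G.edgeSet) where
  Adj x y :=
    match x, y with
    | Sum.inl u, Sum.inl v => G.Adj u v
    | Sum.inl u, Sum.inr e => u ∈ (e : Sym2 V)
    | Sum.inr e, Sum.inl u => u ∈ (e : Sym2 V)
    | Sum.inr e, Sum.inr f => e ≠ f ∧ ∃ v, v ∈ (e : Sym2 V) ∧ v ∈ (f : Sym2 V)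
  symm := by
    refine ⟨?_⟩
    rintro (u | e) (v | f) h
    · exact G.adj_symm h
    · exact h
    · exact h
    · exact ⟨h.1.symm, h.2.imp fun v hv => ⟨hv.2, hv.1⟩⟩
  loopless := by
    refine ⟨?_⟩
    rintro (u | e) h
    · exact G.ne_of_adj h rfl
    · exact h.1 rfl

/-!
A triangle of `L(G)` through `e = uw` is `{e, f, g}` with `e, f, g` pairwise intersecting.
If all three edges share a vertex, that vertex is `u` or `w`; the edges at a vertex form a
clique of `L(G)`, so `f, g` are any two of the other `deg - 1` edges there. Otherwise no vertex
is common to all three, and then `f, g` are `uv, wv` for a common neighbour `v` of `u` and `w`.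
-/

open Finset

theorem Set.ncard_setOf_eq_add_add_of_disjoint {α : Type*} [Finite α] {A P Q : α → Prop}
    (hPQ : ∀ x, A x → P x → ¬Q x) :
    {x | A x}.ncard = {x | A x ∧ P x}.ncard + {x | A x ∧ Q x}.ncard +
      {x | A x ∧ ¬P x ∧ ¬Q x}.ncard := by
  have hsplit : {x | A x} = ({x | A x ∧ P x} ∪ {x | A x ∧ Q x}) ∪ {x | A x ∧ ¬P x ∧ ¬Q x} := by
    ext x
    simp only [Set.mem_ofPred_eq, Set.mem_union]
    tauto
  rw [hsplit, Set.ncard_union_eq, Set.ncard_union_eq]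
  · exact Set.disjoint_left.mpr fun x hP hQ => hPQ x hP.1 hP.2 hQ.2
  · exact Set.disjoint_left.mpr fun x h h' =>
      h.elim (fun hP => h'.2.1 hP.2) (fun hQ => h'.2.2 hQ.2)

theorem Sym2.exists_eq_mk_of_mem_of_notMem {α : Type*} {u w : α} {f g : Sym2 α}
    (huf : u ∈ f) (hwg : w ∈ g) (hug : u ∉ g) (hwf : w ∉ f) (hfg : ∃ v, v ∈ f ∧ v ∈ g) :
    ∃ v, f = s(u, v) ∧ g = s(w, v) := by
  obtain ⟨x, rfl⟩ := Sym2.mem_iff_exists.mp huf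
  obtain ⟨y, rfl⟩ := Sym2.mem_iff_exists.mp hwg
  obtain ⟨t, htf, htg⟩ := hfg
  refine ⟨x, rfl, ?_⟩
  simp only [Sym2.mem_iff] at htf htg hug hwf
  grind

namespace SimpleGraph

section Clique

variable {α : Type*} [DecidableEq α] {H : SimpleGraph α}

theorem IsNClique.exists_eq_triple_of_mem {s : Finset α} {a : α} (hs : H.IsNClique 3 s)
    (ha : a ∈ s) : ∃ b c, H.Adj a b ∧ H.Adj a c ∧ H.Adj b c ∧ s = {a, b, c} := by
  obtain ⟨b, c, -, hs'⟩ := card_eq_two.mp (hs.erase_of_mem ha).card_eq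
  obtain rfl : s = {a, b, c} := by rw [← hs', insert_erase ha]
  obtain ⟨hab, hac, hbc⟩ := is3Clique_triple_iff.mp hs
  exact ⟨b, c, hab, hac, hbc, rfl⟩

theorem IsClique.ncard_isNClique_succ_mem_subset {A : Finset α} (hA : H.IsClique (A : Set α))
    {a : α} (ha : a ∈ A) (n : ℕ) :
    {s : Finset α | H.IsNClique (n + 1) s ∧ a ∈ s ∧ s ⊆ A}.ncard = (#A - 1).choose n := by
  have hset : {s : Finset α | H.IsNClique (n + 1) s ∧ a ∈ s ∧ s ⊆ A} =
      ↑((A.powersetCard (n + 1)).filter ({a} ⊆ ·)) := by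
    ext s
    simp only [Set.mem_ofPred_eq, coe_filter, mem_powersetCard, singleton_subset_iff,
      isNClique_iff]
    exact ⟨fun ⟨⟨_, hcard⟩, has, hsA⟩ => ⟨⟨hsA, hcard⟩, has⟩,
      fun ⟨⟨hsA, hcard⟩, has⟩ => ⟨⟨hA.subset (by simpa using hsA), hcard⟩, has, hsA⟩⟩
  rw [hset, Set.ncard_coe_finset, card_filter_powersetCard_subset _ _ _ (by simpa) (by simp)]
  simp

end Clique

section LineGraph

variable {V : Type*} {G : SimpleGraph V}

theorem isClique_lineGraph_setOf_mem (u : V) :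
    G.lineGraph.IsClique {f : G.edgeSet | u ∈ (f : Sym2 V)} :=
  fun _ hf _ hg hfg => lineGraph_adj_iff_exists.mpr ⟨hfg, u, hf, hg⟩

theorem mem_or_mem_of_lineGraph_adj {u w : V} (huw : G.Adj u w) {f : G.edgeSet}
    (hf : G.lineGraph.Adj ⟨s(u, w), G.mem_edgeSet.mpr huw⟩ f) :
    u ∈ (f : Sym2 V) ∨ w ∈ (f : Sym2 V) := by
  obtain ⟨-, t, ht, htf⟩ := lineGraph_adj_iff_exists.mp hf
  rcases Sym2.mem_iff.mp ht with rfl | rfl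
  exacts [Or.inl htf, Or.inr htf]

theorem isNClique_lineGraph_of_adj {u w v : V} (huw : G.Adj u w) (huv : G.Adj u v)
    (hwv : G.Adj w v) [DecidableEq V] :
    G.lineGraph.IsNClique 3 {⟨s(u, w), G.mem_edgeSet.mpr huw⟩, ⟨s(u, v), G.mem_edgeSet.mpr huv⟩,
      ⟨s(w, v), G.mem_edgeSet.mpr hwv⟩} := by
  have := G.ne_of_adj huw
  have := G.ne_of_adj huv
  have := G.ne_of_adj hwv
  refine is3Clique_triple_iff.mpr ⟨?_, ?_, ?_⟩ <;> rw [lineGraph_adj_iff_exists] <;>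
    simp [Subtype.ext_iff] <;> grind

theorem card_filter_mem_edgeSet [Fintype V] [DecidableEq V] [DecidableRel G.Adj] (u : V) :
    #{f : G.edgeSet | u ∈ (f : Sym2 V)} = G.degree u := by
  rw [← Fintype.card_subtype, ← card_incidenceSet_eq_degree]
  exact Fintype.card_congr (Equiv.subtypeSubtypeEquivSubtypeInter (· ∈ G.edgeSet) (u ∈ ·))

theorem exists_adj_of_lineGraph_adj {u w : V} {f g : G.edgeSet} (huf : u ∈ (f : Sym2 V))
    (hwg : w ∈ (g : Sym2 V)) (hug : u ∉ (g : Sym2 V)) (hwf : w ∉ (f : Sym2 V))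
    (hfg : G.lineGraph.Adj f g) :
    ∃ v, ∃ (huv : G.Adj u v) (hwv : G.Adj w v),
      f = ⟨s(u, v), G.mem_edgeSet.mpr huv⟩ ∧ g = ⟨s(w, v), G.mem_edgeSet.mpr hwv⟩ := by
  obtain ⟨v, hf, hg⟩ :=
    Sym2.exists_eq_mk_of_mem_of_notMem huf hwg hug hwf (lineGraph_adj_iff_exists.mp hfg).2
  exact ⟨v, G.mem_edgeSet.mp (hf ▸ f.2), G.mem_edgeSet.mp (hg ▸ g.2), Subtype.ext hf,
    Subtype.ext hg⟩

theorem ncard_isNClique_lineGraph_not_forall_mem {u w : V} (huw : G.Adj u w) :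
    {s : Finset G.edgeSet | G.lineGraph.IsNClique 3 s ∧ ⟨s(u, w), G.mem_edgeSet.mpr huw⟩ ∈ s ∧
      ¬(∀ f ∈ s, u ∈ (f : Sym2 V)) ∧ ¬(∀ f ∈ s, w ∈ (f : Sym2 V))}.ncard =
    {v | G.Adj u v ∧ G.Adj w v}.ncard := by
  classical
  refine (Set.ncard_congr (fun v hv => {⟨s(u, w), G.mem_edgeSet.mpr huw⟩,
    ⟨s(u, v), G.mem_edgeSet.mpr hv.1⟩, ⟨s(w, v), G.mem_edgeSet.mpr hv.2⟩}) ?_ ?_ ?_).symm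
  · rintro v ⟨huv, hwv⟩
    have := G.ne_of_adj huw
    have := G.ne_of_adj huv
    have := G.ne_of_adj hwv
    refine ⟨isNClique_lineGraph_of_adj huw huv hwv, by simp, ?_, ?_⟩ <;> simp <;> grind
  · rintro v v' ⟨huv, hwv⟩ ⟨huv', hwv'⟩ h
    have : (⟨s(u, v), G.mem_edgeSet.mpr huv⟩ : G.edgeSet) ∈
        ({⟨s(u, w), G.mem_edgeSet.mpr huw⟩, ⟨s(u, v'), G.mem_edgeSet.mpr huv'⟩,
          ⟨s(w, v'), G.mem_edgeSet.mpr hwv'⟩} : Finset G.edgeSet) := h ▸ by simp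
    simp only [mem_insert, mem_singleton, Subtype.mk.injEq, Sym2.congr_right, Sym2.eq_iff] at this
    rcases this with hvw | hvv' | ⟨huw', -⟩ | ⟨-, hvw⟩
    exacts [absurd hvw (G.ne_of_adj hwv).symm, hvv', absurd huw' (G.ne_of_adj huw),
      absurd hvw (G.ne_of_adj hwv).symm]
  · rintro s ⟨hs, he, hnu, hnw⟩
    obtain ⟨f, g, hef, heg, hfg, rfl⟩ := hs.exists_eq_triple_of_mem he
    simp only [forall_mem_insert, mem_singleton, forall_eq, Sym2.mem_mk_left, Sym2.mem_mk_right,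
      true_and, not_and] at hnu hnw
    rcases mem_or_mem_of_lineGraph_adj huw hef with huf | hwf
    · have hug := hnu huf
      have hwg := (mem_or_mem_of_lineGraph_adj huw heg).resolve_left hug
      obtain ⟨v, huv, hwv, rfl, rfl⟩ :=
        exists_adj_of_lineGraph_adj huf hwg hug (fun h => hnw h hwg) hfg
      exact ⟨v, ⟨huv, hwv⟩, rfl⟩
    · have hwg : w ∉ (g : Sym2 V) := hnw hwf
      have hug := (mem_or_mem_of_lineGraph_adj huw heg).resolve_right hwg
      obtain ⟨v, huv, hwv, rfl, rfl⟩ :=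
        exists_adj_of_lineGraph_adj hug hwf (fun h => hnu h hug) hwg hfg.symm
      exact ⟨v, ⟨huv, hwv⟩, by rw [pair_comm]⟩

variable [DecidableEq V]

theorem ncard_isNClique_lineGraph_forall_mem [Fintype V] [DecidableRel G.Adj] {u : V}
    {e : G.edgeSet} (hu : u ∈ (e : Sym2 V)) :
    {s : Finset G.edgeSet | G.lineGraph.IsNClique 3 s ∧ e ∈ s ∧ ∀ f ∈ s, u ∈ (f : Sym2 V)}.ncard =
      (G.degree u - 1).choose 2 := by
  have hA : G.lineGraph.IsClique
      (({f | u ∈ (f : Sym2 V)} : Finset G.edgeSet) : Set G.edgeSet) := by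
    simpa using isClique_lineGraph_setOf_mem u
  rw [← card_filter_mem_edgeSet,
    ← hA.ncard_isNClique_succ_mem_subset ((mem_filter_univ e).mpr hu) 2]
  simp only [subset_iff, mem_filter_univ]

end LineGraph

end SimpleGraph

/-- The primitive degree of an edge `e = uw` of `G`, viewed as a vertex of the line
graph `L(G)`, equals `Λ + C(deg u - 1, 2) + C(deg w - 1, 2)`, where `Λ` is the number
of triangles of `G` containing `e`, i.e. the number of common neighbours of `u` and `w`. -/
theorem primDegree_lineGraph {V : Type*} [Fintype V] (G : SimpleGraph V)
    [DecidableRel G.Adj] (u w : V) (huw : G.Adj u w) :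
    G.lineGraph.primDegree ⟨s(u, w), G.mem_edgeSet.mpr huw⟩ =
      {v : V | G.Adj u v ∧ G.Adj w v}.ncard +
        (G.degree u - 1).choose 2 + (G.degree w - 1).choose 2 := by
  classical
  have hstars_disjoint : ∀ s : Finset G.edgeSet, G.lineGraph.IsNClique 3 s ∧
      ⟨s(u, w), G.mem_edgeSet.mpr huw⟩ ∈ s → (∀ f ∈ s, u ∈ (f : Sym2 V)) →
      ¬∀ f ∈ s, w ∈ (f : Sym2 V) := by
    rintro s ⟨hs, he⟩ hu hw
    obtain ⟨f, g, hef, -, -, rfl⟩ := hs.exists_eq_triple_of_mem he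
    have hf : (f : Sym2 V) = s(u, w) :=
      (Sym2.mem_and_mem_iff (G.ne_of_adj huw)).mp ⟨hu f (by simp), hw f (by simp)⟩
    exact hef.ne (Subtype.ext hf.symm)
  rw [SimpleGraph.primDegree, Set.ncard_setOf_eq_add_add_of_disjoint hstars_disjoint]
  simp only [and_assoc]
  rw [SimpleGraph.ncard_isNClique_lineGraph_forall_mem (Sym2.mem_mk_left u w),
    SimpleGraph.ncard_isNClique_lineGraph_forall_mem (Sym2.mem_mk_right u w),
    SimpleGraph.ncard_isNClique_lineGraph_not_forall_mem huw]
  ring
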